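/- Let Φ ∈ ℝ^{M×N} satisfy the RIP of order 2s with constant δ ∈ (0,1). Then Φ satisfies the null space property of order s with constant γ = √2·δ/(1−δ); that is, for every v ∈ ker Φ and every index set T ⊆ {1,...,N} with |T| ≤ s, ‖v_T‖₁ ≤ (√2·δ/(1−δ))·‖v_{T^c}‖₁. -/

import Mathlib

/-!
Sort the entries of `v ∈ ker Φ` by decreasing modulus and cut them into consecutive blocks
`T₀, T₁, …` of size `s`. For disjointly supported `s`-sparse `x, y`, polarization and RIP of order
`2s` give `|⟪Φx, Φy⟫| ≤ δ ‖x‖₂ ‖y‖₂`. With `h = v_{T₀} + v_{T₁}` we have `Φh = -∑_{j ≥ 2} Φ v_{Tⱼ}`,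
hence `(1 - δ) ‖h‖₂² ≤ ‖Φh‖₂² ≤ √2 δ ‖h‖₂ ∑_{j ≥ 2} ‖v_{Tⱼ}‖₂`. Every entry on `T_{j+1}` is at most
the average modulus on the full block `Tⱼ`, so `√s ∑_{j ≥ 2} ‖v_{Tⱼ}‖₂ ≤ ‖v_{T₀ᶜ}‖₁`, while
`‖v_{T₀}‖₁ ≤ √s ‖h‖₂` by Cauchy–Schwarz. Since `T₀` carries the `s` largest entries, the inequality
for `T₀` implies it for every `T` with `|T| ≤ s`.
-/

open scoped BigOperators Matrix

/-- The Euclidean (ℓ²) norm of a real vector. -/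
noncomputable def l2norm {ι : Type*} [Fintype ι] (v : ι → ℝ) : ℝ :=
  Real.sqrt (∑ i, (v i) ^ 2)

/-- The ℓ¹ norm of a real vector. -/
noncomputable def l1norm {ι : Type*} [Fintype ι] (v : ι → ℝ) : ℝ :=
  ∑ i, |v i|

/-- `v` has at most `k` nonzero entries. -/
def IsSparse {ι : Type*} {α : Type*} [Zero α] (k : ℕ) (v : ι → α) : Prop :=
  ∃ T : Finset ι, T.card ≤ k ∧ ∀ i ∉ T, v i = 0

/-- The restricted isometry property of order `k` with constant `δ`. -/
def HasRIP {M N : ℕ} (Φ : Matrix (Fin M) (Fin N) ℝ) (k : ℕ) (δ : ℝ) : Prop :=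
  ∀ v : Fin N → ℝ, IsSparse k v →
    (1 - δ) * l2norm v ^ 2 ≤ l2norm (Φ.mulVec v) ^ 2 ∧
      l2norm (Φ.mulVec v) ^ 2 ≤ (1 + δ) * l2norm v ^ 2

/-- `Φ` has the same null space as some matrix with RIP of order `k`, constant `δ`. -/
def HasRIPNSP {M N : ℕ} (Φ : Matrix (Fin M) (Fin N) ℝ) (k : ℕ) (δ : ℝ) : Prop :=
  ∃ A : Matrix (Fin M) (Fin N) ℝ,
    {v : Fin N → ℝ | A.mulVec v = 0} = {v : Fin N → ℝ | Φ.mulVec v = 0} ∧ HasRIP A k δ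

/-- The null space property of order `s` with constant `γ`. -/
def HasNSP {M N : ℕ} (Φ : Matrix (Fin M) (Fin N) ℝ) (s : ℕ) (γ : ℝ) : Prop :=
  ∀ v : Fin N → ℝ, Φ.mulVec v = 0 → ∀ T : Finset (Fin N), T.card ≤ s →
    ∑ i ∈ T, |v i| ≤ γ * ∑ i ∈ Tᶜ, |v i|

/-- `σ_s(x)`: the ℓ¹ distance from `x` to the set of `s`-sparse vectors. -/
noncomputable def sigmaApprox {N : ℕ} (s : ℕ) (x : Fin N → ℝ) : ℝ :=
  sInf { t : ℝ | ∃ y : Fin N → ℝ, IsSparse s y ∧ t = l1norm (x - y) }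

/-- The smallest positive singular value of `Φ`: the infimum of `‖Φx‖₂` over unit
vectors `x` orthogonal to the kernel of `Φ`. -/
noncomputable def smallestPosSV {M N : ℕ} (Φ : Matrix (Fin M) (Fin N) ℝ) : ℝ :=
  sInf { t : ℝ | ∃ x : Fin N → ℝ, l2norm x = 1 ∧
    (∀ y : Fin N → ℝ, Φ.mulVec y = 0 → x ⬝ᵥ y = 0) ∧ t = l2norm (Φ.mulVec x) }

/-- The operator norm of `Φ` (sup of `‖Φx‖₂` over unit vectors). -/
noncomputable def opNorm {M N : ℕ} (Φ : Matrix (Fin M) (Fin N) ℝ) : ℝ :=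
  sSup { t : ℝ | ∃ x : Fin N → ℝ, l2norm x = 1 ∧ t = l2norm (Φ.mulVec x) }

open Finset

section L2

variable {ι : Type*} [Fintype ι]

lemma l2norm_eq_norm (v : ι → ℝ) : l2norm v = ‖(WithLp.toLp 2 v : EuclideanSpace ℝ ι)‖ := by
  simp [l2norm, EuclideanSpace.norm_eq]

lemma l2norm_nonneg (v : ι → ℝ) : 0 ≤ l2norm v :=
  Real.sqrt_nonneg _

lemma l2norm_eq_zero {v : ι → ℝ} : l2norm v = 0 ↔ v = 0 := by
  simp [l2norm_eq_norm]

lemma sq_l2norm (v : ι → ℝ) : l2norm v ^ 2 = ∑ i, v i ^ 2 :=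
  Real.sq_sqrt (by positivity)

lemma sq_l2norm_eq_dotProduct (v : ι → ℝ) : l2norm v ^ 2 = v ⬝ᵥ v := by
  rw [sq_l2norm]
  simp only [dotProduct, sq]

lemma l2norm_smul (c : ℝ) (v : ι → ℝ) : l2norm (c • v) = |c| * l2norm v := by
  simp [l2norm_eq_norm, norm_smul]

lemma l2norm_neg (v : ι → ℝ) : l2norm (-v) = l2norm v := by
  simp [l2norm]

lemma four_mul_dotProduct (x y : ι → ℝ) :
    4 * (x ⬝ᵥ y) = l2norm (x + y) ^ 2 - l2norm (x - y) ^ 2 := by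
  simp only [sq_l2norm, dotProduct, mul_sum, ← sum_sub_distrib, Pi.add_apply, Pi.sub_apply]
  exact sum_congr rfl fun i _ => by ring

variable {x y : ι → ℝ}

lemma sq_l2norm_add_of_mul_eq_zero (hxy : ∀ i, x i * y i = 0) :
    l2norm (x + y) ^ 2 = l2norm x ^ 2 + l2norm y ^ 2 := by
  simp only [sq_l2norm, ← sum_add_distrib, Pi.add_apply]
  exact sum_congr rfl fun i _ => by linear_combination 2 * hxy i

lemma sq_l2norm_sub_of_mul_eq_zero (hxy : ∀ i, x i * y i = 0) :
    l2norm (x - y) ^ 2 = l2norm x ^ 2 + l2norm y ^ 2 := by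
  simp only [sq_l2norm, ← sum_add_distrib, Pi.sub_apply]
  exact sum_congr rfl fun i _ => by linear_combination -2 * hxy i

lemma l2norm_le_l2norm_add_of_mul_eq_zero (hxy : ∀ i, x i * y i = 0) :
    l2norm x ≤ l2norm (x + y) := by
  refine (pow_le_pow_iff_left₀ (l2norm_nonneg _) (l2norm_nonneg _) two_ne_zero).1 ?_
  rw [sq_l2norm_add_of_mul_eq_zero hxy]
  nlinarith [l2norm_nonneg y]

lemma l2norm_add_l2norm_le_of_mul_eq_zero (hxy : ∀ i, x i * y i = 0) :
    l2norm x + l2norm y ≤ √2 * l2norm (x + y) := by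
  refine (pow_le_pow_iff_left₀ (add_nonneg (l2norm_nonneg x) (l2norm_nonneg y))
    (mul_nonneg (Real.sqrt_nonneg 2) (l2norm_nonneg _)) two_ne_zero).1 ?_
  rw [mul_pow, Real.sq_sqrt zero_le_two, sq_l2norm_add_of_mul_eq_zero hxy]
  nlinarith [sq_nonneg (l2norm x - l2norm y)]

lemma l2norm_indicator (A : Finset ι) (v : ι → ℝ) :
    l2norm ((A : Set ι).indicator v) = √(∑ i ∈ A, v i ^ 2) := by
  classical
  simp [l2norm, Set.indicator_apply, apply_ite (· ^ 2), sum_ite_mem]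

end L2

namespace IsSparse

variable {ι α : Type*} {k l : ℕ}

lemma add [AddZeroClass α] {x y : ι → α} (hx : IsSparse k x) (hy : IsSparse l y) :
    IsSparse (k + l) (x + y) := by
  classical
  obtain ⟨A, hA, hxA⟩ := hx
  obtain ⟨B, hB, hyB⟩ := hy
  refine ⟨A ∪ B, (card_union_le A B).trans (by omega), fun i hi => ?_⟩
  simp only [mem_union, not_or] at hi
  simp [hxA i hi.1, hyB i hi.2]

lemma neg [NegZeroClass α] {x : ι → α} (hx : IsSparse k x) : IsSparse k (-x) := by
  obtain ⟨A, hA, hxA⟩ := hx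
  exact ⟨A, hA, fun i hi => by simp [hxA i hi]⟩

lemma sub [AddGroup α] {x y : ι → α} (hx : IsSparse k x) (hy : IsSparse l y) :
    IsSparse (k + l) (x - y) := by
  rw [sub_eq_add_neg]
  exact IsSparse.add hx (IsSparse.neg hy)

lemma smul {R : Type*} [Zero α] [SMulZeroClass R α] (c : R) {x : ι → α} (hx : IsSparse k x) :
    IsSparse k (c • x) := by
  obtain ⟨A, hA, hxA⟩ := hx
  exact ⟨A, hA, fun i hi => by simp [hxA i hi]⟩

end IsSparse

lemma isSparse_indicator {ι α : Type*} [Zero α] {k : ℕ} {A : Finset ι} (hA : #A ≤ k) (v : ι → α) :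
    IsSparse k ((A : Set ι).indicator v) :=
  ⟨A, hA, fun _ hi => Set.indicator_of_notMem (by simpa using hi) v⟩

section RIP

variable {M N : ℕ} {Φ : Matrix (Fin M) (Fin N) ℝ} {δ : ℝ} {k l : ℕ} {x y : Fin N → ℝ}

lemma HasRIP.two_mul_dotProduct_mulVec_le (hΦ : HasRIP Φ (k + l) δ) (hx : IsSparse k x)
    (hy : IsSparse l y) (hxy : ∀ i, x i * y i = 0) :
    2 * (Φ *ᵥ x ⬝ᵥ Φ *ᵥ y) ≤ δ * (l2norm x ^ 2 + l2norm y ^ 2) := by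
  have hadd := (hΦ _ (IsSparse.add hx hy)).2
  have hsub := (hΦ _ (IsSparse.sub hx hy)).1
  rw [sq_l2norm_add_of_mul_eq_zero hxy, Matrix.mulVec_add] at hadd
  rw [sq_l2norm_sub_of_mul_eq_zero hxy, Matrix.mulVec_sub] at hsub
  linarith [four_mul_dotProduct (Φ *ᵥ x) (Φ *ᵥ y)]

/-- Rescaling `x` and `y` to equal norms turns the bound by `δ (‖x‖² + ‖y‖²) / 2` into
`δ ‖x‖ ‖y‖`. -/
lemma HasRIP.dotProduct_mulVec_le (hΦ : HasRIP Φ (k + l) δ) (hx : IsSparse k x)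
    (hy : IsSparse l y) (hxy : ∀ i, x i * y i = 0) :
    Φ *ᵥ x ⬝ᵥ Φ *ᵥ y ≤ δ * (l2norm x * l2norm y) := by
  rcases (mul_nonneg (l2norm_nonneg x) (l2norm_nonneg y)).eq_or_lt with hab | hab
  · rw [← hab, mul_zero]
    rcases mul_eq_zero.1 hab.symm with hx0 | hy0
    · simp [l2norm_eq_zero.1 hx0]
    · simp [l2norm_eq_zero.1 hy0]
  have hscaled := HasRIP.two_mul_dotProduct_mulVec_le hΦ
    (IsSparse.smul (l2norm y) hx) (IsSparse.smul (l2norm x) hy)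
    fun i => by
      simp only [Pi.smul_apply, smul_eq_mul]
      linear_combination l2norm y * l2norm x * hxy i
  simp only [Matrix.mulVec_smul, smul_dotProduct, dotProduct_smul, smul_eq_mul, l2norm_smul,
    abs_of_nonneg (l2norm_nonneg _)] at hscaled
  nlinarith

lemma HasRIP.abs_dotProduct_mulVec_le (hΦ : HasRIP Φ (k + l) δ) (hx : IsSparse k x)
    (hy : IsSparse l y) (hxy : ∀ i, x i * y i = 0) :
    |Φ *ᵥ x ⬝ᵥ Φ *ᵥ y| ≤ δ * (l2norm x * l2norm y) := by
  have hneg := HasRIP.dotProduct_mulVec_le hΦ hx (IsSparse.neg hy) (fun i => by simp [hxy i])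
  rw [Matrix.mulVec_neg, dotProduct_neg, l2norm_neg] at hneg
  exact abs_le.2 ⟨by linarith, HasRIP.dotProduct_mulVec_le hΦ hx hy hxy⟩

end RIP

theorem HasRIP.one_sub_mul_l2norm_add_le {M N s K : ℕ} {Φ : Matrix (Fin M) (Fin N) ℝ} {δ : ℝ}
    (hΦ : HasRIP Φ (2 * s) δ) (hδ : 0 ≤ δ) {u : ℕ → Fin N → ℝ} (hu : ∀ j, IsSparse s (u j))
    (hdisj : Pairwise fun j l => ∀ i, u j i * u l i = 0)
    (hker : Φ *ᵥ ∑ j ∈ range (K + 2), u j = 0) :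
    (1 - δ) * l2norm (u 0 + u 1) ≤ √2 * δ * ∑ j ∈ range K, l2norm (u (j + 2)) := by
  rw [two_mul] at hΦ
  set h := u 0 + u 1
  set S := ∑ j ∈ range K, l2norm (u (j + 2))
  have hΦh : Φ *ᵥ h = -∑ j ∈ range K, Φ *ᵥ u (j + 2) := by
    rw [sum_range_succ', sum_range_succ', Matrix.mulVec_add, Matrix.mulVec_add,
      Matrix.mulVec_sum] at hker
    simp only [h, Matrix.mulVec_add]
    linear_combination hker
  have hcross : ∀ j ∈ range K, -(Φ *ᵥ h ⬝ᵥ Φ *ᵥ u (j + 2)) ≤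
      δ * (l2norm (u 0) + l2norm (u 1)) * l2norm (u (j + 2)) := by
    intro j _
    have h0 := HasRIP.abs_dotProduct_mulVec_le hΦ (hu 0) (hu (j + 2)) (hdisj (by omega))
    have h1 := HasRIP.abs_dotProduct_mulVec_le hΦ (hu 1) (hu (j + 2)) (hdisj (by omega))
    rw [Matrix.mulVec_add, add_dotProduct]
    linarith [neg_abs_le (Φ *ᵥ u 0 ⬝ᵥ Φ *ᵥ u (j + 2)), neg_abs_le (Φ *ᵥ u 1 ⬝ᵥ Φ *ᵥ u (j + 2))]
  have hupper : l2norm (Φ *ᵥ h) ^ 2 ≤ √2 * δ * l2norm h * S := calc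
    l2norm (Φ *ᵥ h) ^ 2 = ∑ j ∈ range K, -(Φ *ᵥ h ⬝ᵥ Φ *ᵥ u (j + 2)) := by
      rw [sq_l2norm_eq_dotProduct]
      nth_rw 2 [hΦh]
      rw [dotProduct_neg, dotProduct_sum, sum_neg_distrib]
    _ ≤ ∑ j ∈ range K, δ * (l2norm (u 0) + l2norm (u 1)) * l2norm (u (j + 2)) :=
      sum_le_sum hcross
    _ = δ * (l2norm (u 0) + l2norm (u 1)) * S := by rw [mul_sum]
    _ ≤ √2 * δ * l2norm h * S := by
      have hpair := l2norm_add_l2norm_le_of_mul_eq_zero (hdisj (show 0 ≠ 1 by omega))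
      have hS : 0 ≤ S := sum_nonneg fun j _ => l2norm_nonneg _
      linarith [mul_le_mul_of_nonneg_right (mul_le_mul_of_nonneg_left hpair hδ) hS]
  have hlower := (hΦ h (IsSparse.add (hu 0) (hu 1))).1
  rcases (l2norm_nonneg h).eq_or_lt with hh | hh
  · rw [← hh, mul_zero]
    exact mul_nonneg (mul_nonneg (Real.sqrt_nonneg 2) hδ) (sum_nonneg fun j _ => l2norm_nonneg _)
  · nlinarith

section SumEstimates

variable {ι : Type*}

lemma sum_abs_le_sqrt_mul_sqrt_sum_sq {s : ℕ} {A : Finset ι} (hA : #A ≤ s) (f : ι → ℝ) :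
    ∑ i ∈ A, |f i| ≤ √s * √(∑ i ∈ A, f i ^ 2) := by
  rw [← Real.sqrt_mul (Nat.cast_nonneg s)]
  refine le_trans (le_abs_self _) (Real.abs_le_sqrt ?_)
  calc (∑ i ∈ A, |f i|) ^ 2 ≤ #A * ∑ i ∈ A, |f i| ^ 2 := sq_sum_le_card_mul_sum_sq
    _ ≤ s * ∑ i ∈ A, f i ^ 2 := by
      simp only [sq_abs]
      gcongr

lemma mul_sum_sq_le_sq {s : ℕ} {C : Finset ι} {f : ι → ℝ} {S : ℝ} (hC : #C ≤ s)
    (hf : ∀ i ∈ C, s * |f i| ≤ S) :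
    s * ∑ i ∈ C, f i ^ 2 ≤ S ^ 2 := by
  rcases Nat.eq_zero_or_pos s with rfl | hs
  · simp [sq_nonneg]
  have hs' : (0 : ℝ) < s := by exact_mod_cast hs
  refine le_of_mul_le_mul_left ?_ hs'
  calc (s : ℝ) * (s * ∑ i ∈ C, f i ^ 2) = ∑ i ∈ C, (s * |f i|) ^ 2 := by
        simp only [mul_sum, mul_pow, sq_abs]; ring_nf
    _ ≤ #C • S ^ 2 := sum_le_card_nsmul _ _ _ fun i hi =>
        pow_le_pow_left₀ (mul_nonneg hs'.le (abs_nonneg _)) (hf i hi) 2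
    _ ≤ s * S ^ 2 := by
      rw [nsmul_eq_mul]
      gcongr

lemma sum_le_sum_of_card_le_of_forall_le [DecidableEq ι] {f : ι → ℝ} (hf : ∀ i, 0 ≤ f i)
    {T A : Finset ι} (hcard : #T ≤ #A) (hle : ∀ i ∉ A, ∀ a ∈ A, f i ≤ f a) :
    ∑ i ∈ T, f i ≤ ∑ a ∈ A, f a := by
  rw [← sum_inter_add_sum_sdiff T A, ← sum_inter_add_sum_sdiff A T, inter_comm]
  gcongr ?_ + ?_
  · exact le_rfl
  rcases (T \ A).eq_empty_or_nonempty with hempty | hne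
  · rw [hempty, sum_empty]
    exact sum_nonneg fun a _ => hf a
  obtain ⟨i₀, hi₀, hmax⟩ := exists_max_image (T \ A) f hne
  have hcard' : #(T \ A) ≤ #(A \ T) := by
    have hT := card_sdiff_add_card_inter T A
    have hA := card_sdiff_add_card_inter A T
    rw [inter_comm] at hA
    omega
  calc ∑ i ∈ T \ A, f i ≤ #(T \ A) • f i₀ := sum_le_card_nsmul _ _ _ hmax
    _ ≤ #(A \ T) • f i₀ := nsmul_le_nsmul_left (hf i₀) hcard'
    _ ≤ ∑ a ∈ A \ T, f a := card_nsmul_le_sum _ _ _ fun a ha =>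
      hle i₀ (mem_sdiff.1 hi₀).2 a (mem_sdiff.1 ha).1

end SumEstimates

section Blocks

variable {N : ℕ} (v : Fin N → ℝ) (s : ℕ)

/-- The position of `i` when the entries of `v` are listed by decreasing modulus. -/
noncomputable def absRank (i : Fin N) : ℕ :=
  (Tuple.sort fun k => -|v k|).symm i

lemma absRank_injective : Function.Injective (absRank v) :=
  Fin.val_injective.comp (Equiv.injective _)

lemma absRank_lt (i : Fin N) : absRank v i < N :=
  ((Tuple.sort fun k => -|v k|).symm i).isLt

lemma abs_le_abs_of_absRank_le {i k : Fin N} (h : absRank v k ≤ absRank v i) :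
    |v i| ≤ |v k| := by
  have hsorted := Tuple.monotone_sort (fun k => -|v k|)
    (show (Tuple.sort _).symm k ≤ (Tuple.sort _).symm i from h)
  simp only [Function.comp_apply, Equiv.apply_symm_apply] at hsorted
  linarith

lemma image_absRank : univ.image (absRank v) = range N := by
  ext m
  simp only [mem_image, mem_univ, true_and, mem_range]
  refine ⟨fun ⟨i, hi⟩ => hi ▸ absRank_lt v i, fun hm => ⟨Tuple.sort (fun k => -|v k|) ⟨m, hm⟩, ?_⟩⟩
  simp [absRank]

/-- The blocks `T₀, T₁, …` of `s` consecutive positions in the decreasing rearrangement of `v`. -/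
noncomputable def block (j : ℕ) : Finset (Fin N) :=
  {i | absRank v i / s = j}

variable {v s}

lemma mem_block {i : Fin N} {j : ℕ} : i ∈ block v s j ↔ absRank v i / s = j := by
  simp [block]

lemma card_block (j : ℕ) : #(block v s j) = #{m ∈ range N | m / s = j} := by
  classical
  rw [← card_image_of_injective _ (absRank_injective v), ← image_absRank v, block,
    filter_image]

lemma card_block_le (hs : 0 < s) (j : ℕ) : #(block v s j) ≤ s := by
  rw [card_block]
  calc #{m ∈ range N | m / s = j} ≤ #(Ico (j * s) ((j + 1) * s)) := by
        refine card_le_card fun m hm => ?_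
        simp only [mem_filter, Nat.div_eq_iff hs] at hm
        simp only [mem_Ico, add_one_mul]
        omega
    _ = s := by simp [add_one_mul]

lemma card_block_of_succ_mul_le (hs : 0 < s) {j : ℕ} (hj : (j + 1) * s ≤ N) :
    #(block v s j) = s := by
  refine le_antisymm (card_block_le hs j) ?_
  rw [card_block]
  calc s = #(Ico (j * s) ((j + 1) * s)) := by simp [add_one_mul]
    _ ≤ #{m ∈ range N | m / s = j} := by
        refine card_le_card fun m hm => ?_
        simp only [mem_Ico, add_one_mul] at hm
        simp only [mem_filter, mem_range, Nat.div_eq_iff hs]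
        rw [add_one_mul] at hj
        omega

lemma succ_mul_le_of_mem_block_succ (hs : 0 < s) {i : Fin N} {j : ℕ} (hi : i ∈ block v s (j + 1)) :
    (j + 1) * s ≤ N := by
  rw [mem_block, Nat.div_eq_iff hs] at hi
  have := absRank_lt v i
  omega

lemma abs_le_abs_of_mem_block_of_lt {i k : Fin N} {j l : ℕ} (hi : i ∈ block v s j)
    (hk : k ∈ block v s l) (hjl : j < l) : |v k| ≤ |v i| := by
  rw [mem_block] at hi hk
  exact abs_le_abs_of_absRank_le v (Nat.lt_of_div_lt_div (hi ▸ hk ▸ hjl)).le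

lemma disjoint_block {j l : ℕ} (hjl : j ≠ l) : Disjoint (block v s j) (block v s l) :=
  disjoint_filter.2 fun _ _ hj hl => hjl (hj.symm.trans hl)

lemma sum_indicator_block {K : ℕ} (hK : N ≤ K) :
    ∑ j ∈ range K, (block v s j : Set (Fin N)).indicator v = v := by
  ext i
  rw [Finset.sum_apply, sum_eq_single (absRank v i / s)]
  · simp [mem_block]
  · intro j _ hj
    exact Set.indicator_of_notMem (by simpa [mem_block] using Ne.symm hj) v
  · exact fun h => absurd
      (mem_range.2 ((Nat.div_le_self _ _).trans_lt ((absRank_lt v i).trans_le hK))) h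

end Blocks

section BlockEstimates

variable {N s : ℕ} (v : Fin N → ℝ)

lemma indicator_block_mul_indicator_block {j l : ℕ} (hjl : j ≠ l) (i : Fin N) :
    (block v s j : Set (Fin N)).indicator v i * (block v s l : Set (Fin N)).indicator v i = 0 := by
  by_cases hi : i ∈ block v s j
  · exact mul_eq_zero_of_right _
      (Set.indicator_of_notMem (by simpa using disjoint_left.1 (disjoint_block hjl) hi) v)
  · exact mul_eq_zero_of_left (Set.indicator_of_notMem (by simpa using hi) v) _

lemma sum_abs_le_sum_abs_block_zero (hs : 0 < s) {T : Finset (Fin N)} (hT : #T ≤ s) :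
    ∑ i ∈ T, |v i| ≤ ∑ i ∈ block v s 0, |v i| := by
  classical
  refine sum_le_sum_of_card_le_of_forall_le (fun i => abs_nonneg (v i)) ?_ fun i hi a ha => ?_
  · rcases le_or_gt s N with hsN | hNs
    · rwa [card_block_of_succ_mul_le hs (by simpa using hsN)]
    · rw [eq_univ_of_forall fun i => mem_block.2 (Nat.div_eq_of_lt ((absRank_lt v i).trans hNs))]
      exact card_le_univ T
  · exact abs_le_abs_of_mem_block_of_lt ha (mem_block.2 rfl)
      (Nat.pos_of_ne_zero fun h => hi (mem_block.2 h))

lemma sqrt_mul_l2norm_indicator_block_succ_le (hs : 0 < s) (j : ℕ) :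
    √s * l2norm ((block v s (j + 1) : Set (Fin N)).indicator v) ≤ ∑ i ∈ block v s j, |v i| := by
  rw [l2norm_indicator, ← Real.sqrt_mul (Nat.cast_nonneg s)]
  refine Real.sqrt_le_sqrt (mul_sum_sq_le_sq (card_block_le hs _) fun i hi => ?_) |>.trans_eq
    (Real.sqrt_sq (sum_nonneg fun i _ => abs_nonneg (v i)))
  have hfull := card_block_of_succ_mul_le (v := v) hs (succ_mul_le_of_mem_block_succ hs hi)
  calc s * |v i| = #(block v s j) • |v i| := by rw [hfull, nsmul_eq_mul]
    _ ≤ ∑ k ∈ block v s j, |v k| := card_nsmul_le_sum _ _ _ fun k hk =>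
      abs_le_abs_of_mem_block_of_lt hk hi (Nat.lt_succ_self j)

lemma sqrt_mul_sum_l2norm_indicator_block_le (hs : 0 < s) (K : ℕ) :
    √s * ∑ j ∈ range K, l2norm ((block v s (j + 2) : Set (Fin N)).indicator v) ≤
      ∑ i ∈ (block v s 0)ᶜ, |v i| := by
  classical
  calc _ ≤ ∑ j ∈ range K, ∑ i ∈ block v s (j + 1), |v i| := by
        rw [mul_sum]
        exact sum_le_sum fun j _ => sqrt_mul_l2norm_indicator_block_succ_le v hs (j + 1)
    _ = ∑ i ∈ (range K).biUnion fun j => block v s (j + 1), |v i| :=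
        (sum_biUnion fun j _ l _ hjl => disjoint_block (by omega)).symm
    _ ≤ _ := by
      refine sum_le_sum_of_subset_of_nonneg (fun i hi => ?_) fun i _ _ => abs_nonneg _
      obtain ⟨j, -, hj⟩ := mem_biUnion.1 hi
      exact mem_compl.2 (disjoint_left.1 (disjoint_block (v := v) (s := s) (Nat.succ_ne_zero j)) hj)

end BlockEstimates

theorem HasRIP.sum_abs_block_zero_le {M N s : ℕ} {Φ : Matrix (Fin M) (Fin N) ℝ} {δ : ℝ}
    (hΦ : HasRIP Φ (2 * s) δ) (hδ0 : 0 ≤ δ) (hδ1 : δ < 1) (hs : 0 < s) {v : Fin N → ℝ}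
    (hv : Φ *ᵥ v = 0) :
    ∑ i ∈ block v s 0, |v i| ≤ √2 * δ / (1 - δ) * ∑ i ∈ (block v s 0)ᶜ, |v i| := by
  set u : ℕ → Fin N → ℝ := fun j => (block v s j : Set (Fin N)).indicator v
  have hdisj : Pairwise fun j l => ∀ i, u j i * u l i = 0 :=
    fun j l hjl => indicator_block_mul_indicator_block v hjl
  have hhead := HasRIP.one_sub_mul_l2norm_add_le hΦ hδ0 (u := u) (K := N)
    (fun j => isSparse_indicator (card_block_le hs j) v) hdisj
    (by rw [sum_indicator_block (Nat.le_add_right N 2)]; exact hv)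
  have htail : √s * ∑ j ∈ range N, l2norm (u (j + 2)) ≤ ∑ i ∈ (block v s 0)ᶜ, |v i| :=
    sqrt_mul_sum_l2norm_indicator_block_le v hs N
  have hblock₀ : ∑ i ∈ block v s 0, |v i| ≤ √s * l2norm (u 0 + u 1) := calc
    _ ≤ √s * l2norm (u 0) := by
      rw [l2norm_indicator]; exact sum_abs_le_sqrt_mul_sqrt_sum_sq (card_block_le hs 0) v
    _ ≤ √s * l2norm (u 0 + u 1) := by
      gcongr; exact l2norm_le_l2norm_add_of_mul_eq_zero (hdisj (by omega))
  rw [div_mul_eq_mul_div, le_div_iff₀ (by linarith)]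
  calc _ ≤ √s * l2norm (u 0 + u 1) * (1 - δ) := by gcongr
    _ = √s * ((1 - δ) * l2norm (u 0 + u 1)) := by ring
    _ ≤ √s * (√2 * δ * ∑ j ∈ range N, l2norm (u (j + 2))) := by gcongr
    _ = √2 * δ * (√s * ∑ j ∈ range N, l2norm (u (j + 2))) := by ring
    _ ≤ √2 * δ * ∑ i ∈ (block v s 0)ᶜ, |v i| := by gcongr

/-- **Lemma 3.5 (Candès): RIP implies NSP.**
If `Φ` has RIP of order `2s` with constant `δ ∈ (0,1)`, then `Φ` has the `(s,γ)`-NSP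
with `γ = √2 δ / (1 - δ)`. -/
theorem stmt8 {s M N : ℕ}
    {δ : ℝ} (hδ0 : 0 < δ) (hδ1 : δ < 1)
    {Φ : Matrix (Fin M) (Fin N) ℝ} (hΦ : HasRIP Φ (2 * s) δ) :
    HasNSP Φ s (Real.sqrt 2 * δ / (1 - δ)) := by
  classical
  intro v hv T hT
  have hγ : 0 ≤ √2 * δ / (1 - δ) := div_nonneg (by positivity) (by linarith)
  rcases Nat.eq_zero_or_pos s with rfl | hs
  · rw [card_eq_zero.1 (Nat.le_zero.1 hT), sum_empty]
    exact mul_nonneg hγ (sum_nonneg fun i _ => abs_nonneg _)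
  have hT₀ := sum_abs_le_sum_abs_block_zero v hs hT
  have hsplitT := sum_add_sum_compl T fun i => |v i|
  have hsplit₀ := sum_add_sum_compl (block v s 0) fun i => |v i|
  calc ∑ i ∈ T, |v i| ≤ ∑ i ∈ block v s 0, |v i| := hT₀
    _ ≤ √2 * δ / (1 - δ) * ∑ i ∈ (block v s 0)ᶜ, |v i| :=
      HasRIP.sum_abs_block_zero_le hΦ hδ0.le hδ1 hs hv
    _ ≤ √2 * δ / (1 - δ) * ∑ i ∈ Tᶜ, |v i| := mul_le_mul_of_nonneg_left (by linarith) hγ
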